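/- With the notation of the context, assume r ≥ 2. Then Y_{0,Q,n} = { y ∈ Y_0 : n_α divides y_i − y_j for all 1 ≤ i, j ≤ r }, and, setting n_{α,(r)} := n_α / gcd(n_α, r), the set { n_α(e_i − e_r) : 1 ≤ i ≤ r − 2 } ∪ { n_{α,(r)}(e_1 + ⋯ + e_{r−1} − (r−1)e_r) } is a ℤ-basis of Y_{0,Q,n}. -/

import Mathlib

/-- The symmetric bilinear form on `Y = ℤ^r` attached to an `n`-fold Brylinski–Deligne
cover of `GL_r`: `B(e_i, e_i) = 2𝐩` and `B(e_i, e_j) = 𝐪` for `i ≠ j`. -/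
def BGL (r : ℕ) (p q : ℤ) (x y : Fin r → ℤ) : ℤ :=
  2 * p * (∑ i, x i * y i) + q * ((∑ i, x i) * (∑ i, y i) - ∑ i, x i * y i)

lemma BGL_add_left (r : ℕ) (p q : ℤ) (a b y : Fin r → ℤ) :
    BGL r p q (a + b) y = BGL r p q a y + BGL r p q b y := by
  simp only [BGL, Pi.add_apply, add_mul, Finset.sum_add_distrib]
  ring

lemma BGL_neg_left (r : ℕ) (p q : ℤ) (a y : Fin r → ℤ) :
    BGL r p q (-a) y = -BGL r p q a y := by
  simp only [BGL, Pi.neg_apply, neg_mul, Finset.sum_neg_distrib]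
  ring

/-- The lattice `Y_{Q,n} = {y ∈ Y : B(y, y') ∈ nℤ for all y' ∈ Y}`. -/
def YQnGL (r n : ℕ) (p q : ℤ) : AddSubgroup (Fin r → ℤ) where
  carrier := {y | ∀ y', (n : ℤ) ∣ BGL r p q y y'}
  zero_mem' := by
    intro y'
    simp [BGL]
  add_mem' := by
    intro a b ha hb y'
    rw [BGL_add_left]
    exact dvd_add (ha y') (hb y')
  neg_mem' := by
    intro a ha y'
    rw [BGL_neg_left]
    exact dvd_neg.mpr (ha y')

/-- `n_α = n / gcd(n, Q(α^∨))` with `Q(α^∨) = 2𝐩 - 𝐪`. -/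
def nAlpha (n : ℕ) (p q : ℤ) : ℕ := n / Int.gcd (n : ℤ) (2 * p - q)

/-- The coroot lattice `Y_0 = {y ∈ ℤ^r : y_1 + ⋯ + y_r = 0}` of `GL_r`. -/
def Y0GL (r : ℕ) : AddSubgroup (Fin r → ℤ) where
  carrier := {y | ∑ i, y i = 0}
  zero_mem' := by simp
  add_mem' := by
    intro a b ha hb
    have ha' : ∑ i, a i = 0 := ha
    have hb' : ∑ i, b i = 0 := hb
    show ∑ i, (a + b) i = 0
    simp only [Pi.add_apply, Finset.sum_add_distrib, ha', hb', add_zero]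
  neg_mem' := by
    intro a ha
    have ha' : ∑ i, a i = 0 := ha
    show ∑ i, (-a) i = 0
    simp only [Pi.neg_apply, Finset.sum_neg_distrib, ha', neg_zero]

/-- The lattice `Y_{0,Q,n} = {y ∈ Y_0 : B(y, y') ∈ nℤ for all y' ∈ Y_0}`. -/
def Y0QnGL (r n : ℕ) (p q : ℤ) : AddSubgroup (Fin r → ℤ) where
  carrier := {y | (∑ i, y i = 0) ∧
      ∀ y' : Fin r → ℤ, (∑ i, y' i = 0) → (n : ℤ) ∣ BGL r p q y y'}
  zero_mem' := ⟨by simp, fun y' _ => by simp [BGL]⟩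
  add_mem' := by
    rintro a b ⟨ha0, ha⟩ ⟨hb0, hb⟩
    refine ⟨?_, fun y' hy' => ?_⟩
    · simp only [Pi.add_apply, Finset.sum_add_distrib, ha0, hb0, add_zero]
    · rw [BGL_add_left]
      exact dvd_add (ha y' hy') (hb y' hy')
  neg_mem' := by
    rintro a ⟨ha0, ha⟩
    refine ⟨?_, fun y' hy' => ?_⟩
    · simp only [Pi.neg_apply, Finset.sum_neg_distrib, ha0, neg_zero]
    · rw [BGL_neg_left]
      exact dvd_neg.mpr (ha y' hy')

/-- The family of vectors `n_α(e_i - e_r)` (`1 ≤ i ≤ r-2`) together with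
`n_{α,(r)}(e_1 + ⋯ + e_{r-1} - (r-1)e_r)`. -/
def basisVecGL (r n : ℕ) (p q : ℤ) (hr : 2 ≤ r) (k : Fin (r - 1)) : Fin r → ℤ :=
  if k.1 < r - 2 then
    (nAlpha n p q : ℤ) • (Pi.single (⟨k.1, by have := k.2; omega⟩ : Fin r) 1
      - Pi.single (⟨r - 1, by omega⟩ : Fin r) 1)
  else
    ((nAlpha n p q / Nat.gcd (nAlpha n p q) r : ℕ) : ℤ) •
      (fun j : Fin r => if j.1 < r - 1 then 1 else -((r : ℤ) - 1))

/-!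
On `Y_0` the form reduces to `B(y, y') = (2𝐩 - 𝐪) ⟨y, y'⟩`, so `n ∣ B(y, y')` iff
`n_α ∣ ⟨y, y'⟩` (as `n ∣ b t ↔ n / gcd(n, b) ∣ t`); testing against `y' = e_i - e_j` shows
that `y ∈ Y_{0,Q,n}` iff `n_α ∣ y_i - y_j` for all `i, j`. For such a `y` of zero sum,
`r y_{r-1} = ∑ⱼ (y_{r-1} - y_j)` is divisible by `n_α`, hence `n_{α,(r)} ∣ y_{r-1}`. The family
is triangular on the first `r - 1` coordinates, which determine a vector of zero sum:
coordinate `r - 1` of a combination is `n_{α,(r)}` times the last coefficient, and coordinate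
`i < r - 1` is `n_α c_i` plus that, so the coefficients are read off.
-/

theorem Int.dvd_mul_iff_ediv_gcd_dvd {a b c : ℤ} (ha : a ≠ 0) :
    a ∣ b * c ↔ a / a.gcd b ∣ c := by
  set d : ℤ := (a.gcd b : ℤ)
  have hd : d ≠ 0 := by simpa [d] using Int.gcd_ne_zero_left ha
  have hda : d * (a / d) = a := Int.mul_ediv_cancel' (Int.gcd_dvd_left a b)
  have hdb : d * (b / d) = b := Int.mul_ediv_cancel' (Int.gcd_dvd_right a b)
  have hcop : IsCoprime (a / d) (b / d) :=
    Int.isCoprime_iff_gcd_eq_one.2 (Int.gcd_ediv_gcd_ediv_gcd (Int.gcd_pos_of_ne_zero_left b ha))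
  calc a ∣ b * c ↔ d * (a / d) ∣ d * (b / d * c) := by rw [hda, ← mul_assoc, hdb]
    _ ↔ a / d ∣ b / d * c := mul_dvd_mul_iff_left hd
    _ ↔ a / d ∣ c := ⟨hcop.dvd_of_dvd_mul_left, fun h => h.mul_left _⟩

theorem dvd_sum_mul_iff_forall_dvd_sub {ι : Type*} [Fintype ι] [DecidableEq ι] (m : ℤ)
    (y : ι → ℤ) :
    (∀ y' : ι → ℤ, ∑ i, y' i = 0 → m ∣ ∑ i, y i * y' i) ↔ ∀ i j, m ∣ y i - y j := by
  refine ⟨fun h i j => ?_, fun h y' hy' => ?_⟩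
  · have := h (Pi.single i 1 - Pi.single j 1) (by simp [Finset.sum_sub_distrib])
    simpa [mul_sub, Finset.sum_sub_distrib, Pi.single_apply] using this
  · rcases isEmpty_or_nonempty ι with hι | ⟨⟨i₀⟩⟩
    · simp
    have : ∑ i, y i * y' i = ∑ i, (y i - y i₀) * y' i := by
      simp [sub_mul, Finset.sum_sub_distrib, ← Finset.mul_sum, hy']
    rw [this]
    exact Finset.dvd_sum fun i _ => (h i i₀).mul_right _

theorem dvd_card_mul_of_forall_dvd_sub {ι : Type*} [Fintype ι] {m : ℤ} {y : ι → ℤ}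
    (hy : ∑ i, y i = 0) (h : ∀ i j, m ∣ y i - y j) (j : ι) : m ∣ Fintype.card ι * y j := by
  have : (Fintype.card ι : ℤ) * y j = ∑ i, (y j - y i) := by
    simp [Finset.sum_sub_distrib, hy]
  rw [this]
  exact Finset.dvd_sum fun i _ => h j i

theorem eq_of_sum_eq_zero_of_forall_castSucc {G : Type*} [AddCommGroup G] {k : ℕ}
    {x y : Fin (k + 1) → G} (hx : ∑ i, x i = 0) (hy : ∑ i, y i = 0)
    (h : ∀ i : Fin k, x i.castSucc = y i.castSucc) : x = y := by
  rw [Fin.sum_univ_castSucc] at hx hy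
  simp only [h] at hx
  funext i
  induction i using Fin.lastCases with
  | last => exact add_left_cancel (hx.trans hy.symm)
  | cast i => exact h i

theorem BGL_eq_of_sum_eq_zero_right {r : ℕ} (p q : ℤ) (y : Fin r → ℤ) {y' : Fin r → ℤ}
    (hy' : ∑ i, y' i = 0) : BGL r p q y y' = (2 * p - q) * ∑ i, y i * y' i := by
  rw [BGL, hy', mul_zero, zero_sub]
  ring

theorem natCast_nAlpha (n : ℕ) (p q : ℤ) :
    (nAlpha n p q : ℤ) = n / (Int.gcd n (2 * p - q) : ℤ) :=
  Int.natCast_ediv _ _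

theorem nAlpha_pos {n : ℕ} (hn : 0 < n) (p q : ℤ) : 0 < nAlpha n p q :=
  Nat.div_gcd_pos_of_pos_left _ hn

theorem mem_Y0QnGL_iff {r n : ℕ} (hn : 0 < n) (p q : ℤ) (y : Fin r → ℤ) :
    y ∈ Y0QnGL r n p q ↔ ∑ i, y i = 0 ∧ ∀ i j, (nAlpha n p q : ℤ) ∣ y i - y j := by
  have hBGL : ∀ y' : Fin r → ℤ, ∑ i, y' i = 0 → ((n : ℤ) ∣ BGL r p q y y' ↔
      (nAlpha n p q : ℤ) ∣ ∑ i, y i * y' i) := fun y' hy' => by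
    rw [BGL_eq_of_sum_eq_zero_right p q y hy', natCast_nAlpha,
      Int.dvd_mul_iff_ediv_gcd_dvd (by exact_mod_cast hn.ne')]
  change (_ ∧ _) ↔ _
  rw [← dvd_sum_mul_iff_forall_dvd_sub]
  exact and_congr_right fun _ => forall_congr' fun y' => imp_congr_right (hBGL y')

def nAlphaR (n r : ℕ) (p q : ℤ) : ℕ := nAlpha n p q / (nAlpha n p q).gcd r

theorem nAlphaR_pos {n : ℕ} (hn : 0 < n) (r : ℕ) (p q : ℤ) : 0 < nAlphaR n r p q :=
  Nat.div_gcd_pos_of_pos_left _ (nAlpha_pos hn p q)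

section Basis

variable {s n : ℕ} {p q : ℤ}

/- We write `r = s + 2` and index from `0`: the paper's `e_r` is `Pi.single (Fin.last (s + 1)) 1`,
its coordinate `y_{r-1}` is `y (Fin.last s).castSucc`, and the basis vector indexed by
`Fin.last s` is the one scaled by `n_{α,(r)}`. -/

theorem basisVecGL_castSucc (i : Fin s) :
    basisVecGL (s + 2) n p q (Nat.le_add_left 2 s) i.castSucc =
      (nAlpha n p q : ℤ) • (Pi.single i.castSucc.castSucc 1 - Pi.single (Fin.last (s + 1)) 1) := by
  rw [basisVecGL, if_pos (by simp)]
  rfl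

theorem basisVecGL_last :
    basisVecGL (s + 2) n p q (Nat.le_add_left 2 s) (Fin.last s) =
      (nAlphaR n (s + 2) p q : ℤ) •
        (1 - ((s + 2 : ℕ) : ℤ) • Pi.single (Fin.last (s + 1)) 1) := by
  rw [basisVecGL, if_neg (by simp)]
  congr 1
  funext j
  induction j using Fin.lastCases with
  | last => simp
  | cast j => simp [j.isLt, Fin.castSucc_ne_last]

theorem zsmul_single_sub_single_mem_Y0QnGL {r : ℕ} (hn : 0 < n) (a b : Fin r) :
    (nAlpha n p q : ℤ) • (Pi.single a 1 - Pi.single b 1 : Fin r → ℤ) ∈ Y0QnGL r n p q := by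
  refine (mem_Y0QnGL_iff hn p q _).2 ⟨by simp [Finset.sum_sub_distrib, ← Finset.mul_sum], ?_⟩
  intro i j
  simp only [Pi.smul_apply, smul_eq_mul, ← mul_sub]
  exact dvd_mul_right _ _

theorem zsmul_one_sub_card_smul_single_mem_Y0QnGL {r : ℕ} (hn : 0 < n) (a : Fin r) :
    (nAlphaR n r p q : ℤ) • (1 - (r : ℤ) • Pi.single a 1 : Fin r → ℤ) ∈ Y0QnGL r n p q := by
  refine (mem_Y0QnGL_iff hn p q _).2 ⟨by simp [Finset.sum_sub_distrib, ← Finset.mul_sum], ?_⟩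
  have hdvd : (nAlpha n p q : ℤ) ∣ r * nAlphaR n r p q := by
    rw [Int.dvd_mul_iff_ediv_gcd_dvd (by exact_mod_cast (nAlpha_pos hn p q).ne'),
      Int.gcd_natCast_natCast, nAlphaR, Int.natCast_ediv]
  intro i j
  set e : Fin r → ℤ := Pi.single a 1
  have hsub : ((nAlphaR n r p q : ℤ) • (1 - (r : ℤ) • e)) i -
      ((nAlphaR n r p q : ℤ) • (1 - (r : ℤ) • e)) j = r * nAlphaR n r p q * (e j - e i) := by
    simp only [Pi.smul_apply, Pi.sub_apply, Pi.one_apply, smul_eq_mul]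
    ring
  exact hsub ▸ hdvd.mul_right _

theorem basisVecGL_mem (hn : 0 < n) (k : Fin (s + 1)) :
    basisVecGL (s + 2) n p q (Nat.le_add_left 2 s) k ∈ Y0QnGL (s + 2) n p q := by
  induction k using Fin.lastCases with
  | last => exact basisVecGL_last ▸ zsmul_one_sub_card_smul_single_mem_Y0QnGL hn _
  | cast i => exact basisVecGL_castSucc i ▸ zsmul_single_sub_single_mem_Y0QnGL hn _ _

theorem sum_smul_basisVecGL_apply_castSucc_castSucc (c : Fin (s + 1) → ℤ) (i : Fin s) :
    (∑ k, c k • basisVecGL (s + 2) n p q (Nat.le_add_left 2 s) k) i.castSucc.castSucc =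
      nAlpha n p q * c i.castSucc + nAlphaR n (s + 2) p q * c (Fin.last s) := by
  simp [Fin.sum_univ_castSucc, basisVecGL_castSucc, basisVecGL_last, Pi.single_apply, mul_comm]

theorem sum_smul_basisVecGL_apply_last_castSucc (c : Fin (s + 1) → ℤ) :
    (∑ k, c k • basisVecGL (s + 2) n p q (Nat.le_add_left 2 s) k) (Fin.last s).castSucc =
      (nAlphaR n (s + 2) p q : ℤ) * c (Fin.last s) := by
  simp [Fin.sum_univ_castSucc, basisVecGL_castSucc, basisVecGL_last, mul_comm]

theorem sum_smul_basisVecGL_mem (hn : 0 < n) (c : Fin (s + 1) → ℤ) :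
    ∑ k, c k • basisVecGL (s + 2) n p q (Nat.le_add_left 2 s) k ∈ Y0QnGL (s + 2) n p q :=
  sum_mem fun k _ => zsmul_mem (basisVecGL_mem hn k) _

theorem sum_smul_basisVecGL_injective (hn : 0 < n) :
    Function.Injective fun c : Fin (s + 1) → ℤ =>
      ∑ k, c k • basisVecGL (s + 2) n p q (Nat.le_add_left 2 s) k := by
  intro c c' h
  have hlast : c (Fin.last s) = c' (Fin.last s) := by
    have := congrFun h (Fin.last s).castSucc
    simp only [sum_smul_basisVecGL_apply_last_castSucc] at this
    exact mul_left_cancel₀ (by exact_mod_cast (nAlphaR_pos hn _ p q).ne') this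
  funext k
  induction k using Fin.lastCases with
  | last => exact hlast
  | cast i =>
    have := congrFun h i.castSucc.castSucc
    simp only [sum_smul_basisVecGL_apply_castSucc_castSucc, hlast, add_left_inj] at this
    exact mul_left_cancel₀ (by exact_mod_cast (nAlpha_pos hn p q).ne') this

theorem exists_sum_smul_basisVecGL_eq (hn : 0 < n) {y : Fin (s + 2) → ℤ}
    (hy : y ∈ Y0QnGL (s + 2) n p q) :
    ∃ c : Fin (s + 1) → ℤ, ∑ k, c k • basisVecGL (s + 2) n p q (Nat.le_add_left 2 s) k = y := by
  obtain ⟨hy0, hdvd⟩ := (mem_Y0QnGL_iff hn p q y).1 hy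
  set l := (Fin.last s).castSucc
  have hl : (nAlphaR n (s + 2) p q : ℤ) ∣ y l := by
    have := dvd_card_mul_of_forall_dvd_sub hy0 hdvd l
    rwa [Fintype.card_fin, Int.dvd_mul_iff_ediv_gcd_dvd
      (by exact_mod_cast (nAlpha_pos hn p q).ne'), Int.gcd_natCast_natCast,
      ← Int.natCast_ediv] at this
  refine ⟨Fin.snoc (fun i => (y i.castSucc.castSucc - y l) / nAlpha n p q)
    (y l / nAlphaR n (s + 2) p q), ?_⟩
  refine eq_of_sum_eq_zero_of_forall_castSucc
    ((mem_Y0QnGL_iff hn p q _).1 (sum_smul_basisVecGL_mem hn _)).1 hy0 fun j => ?_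
  induction j using Fin.lastCases with
  | last =>
    rw [sum_smul_basisVecGL_apply_last_castSucc, Fin.snoc_last, Int.mul_ediv_cancel' hl]
  | cast i =>
    rw [sum_smul_basisVecGL_apply_castSucc_castSucc, Fin.snoc_castSucc, Fin.snoc_last,
      Int.mul_ediv_cancel' (hdvd _ _), Int.mul_ediv_cancel' hl, sub_add_cancel]

end Basis

/-- For `r ≥ 2`:
`Y_{0,Q,n} = {y ∈ Y_0 : n_α ∣ y_i - y_j for all i, j}`, and the family
`{n_α(e_i - e_r) : 1 ≤ i ≤ r-2} ∪ {n_{α,(r)}(e_1 + ⋯ + e_{r-1} - (r-1)e_r)}` is a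
ℤ-basis of `Y_{0,Q,n}` (every ℤ-linear combination lies in `Y_{0,Q,n}`, and every element
of `Y_{0,Q,n}` is such a combination in a unique way). -/
theorem stmt13 (r n : ℕ) (hr : 2 ≤ r) (hn : 0 < n) (p q : ℤ) :
    ((Y0QnGL r n p q : AddSubgroup (Fin r → ℤ)) : Set (Fin r → ℤ))
        = {y | (∑ i, y i = 0) ∧ ∀ i j : Fin r, ((nAlpha n p q : ℕ) : ℤ) ∣ y i - y j} ∧
    (∀ c : Fin (r - 1) → ℤ, (∑ k, c k • basisVecGL r n p q hr k) ∈ Y0QnGL r n p q) ∧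
    (∀ y ∈ Y0QnGL r n p q, ∃! c : Fin (r - 1) → ℤ,
        ∑ k, c k • basisVecGL r n p q hr k = y) := by
  obtain ⟨s, rfl⟩ : ∃ s, r = s + 2 := ⟨r - 2, by omega⟩
  refine ⟨Set.ext fun y => mem_Y0QnGL_iff hn p q y, sum_smul_basisVecGL_mem hn, fun y hy => ?_⟩
  obtain ⟨c, hc⟩ := exists_sum_smul_basisVecGL_eq hn hy
  exact ⟨c, hc, fun c' hc' => sum_smul_basisVecGL_injective hn (hc'.trans hc.symm)⟩
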